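/- Let θ ≥ 1 and let L_n = M_n ··· M_1 be a product of i.i.d. random nonnegative p×p matrices. Suppose there is a continuous function r_θ on the ℓ¹-unit simplex X with 0 < c₁ ≤ r_θ ≤ c₂ and E[|M x|^θ r_θ(Mx/|Mx|)] = λ(θ) r_θ(x) for all x ∈ X. Then E[|L_n 1|^θ] ≤ p^θ (c₂/c₁) λ(θ)^n for all n ≥ 1. -/

import Mathlib

open Finset MeasureTheory ProbabilityTheory

/-- `L_n = M_n ··· M_1`, product of random matrices (given as plain functions),
with `L_0 = Id`. -/
noncomputable def matProdF {Ω : Type*} {p : ℕ}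
    (M : ℕ → Ω → (Fin p → Fin p → ℝ)) : ℕ → Ω → (Fin p → Fin p → ℝ)
  | 0 => fun _ i j => if i = j then 1 else 0
  | n + 1 => fun ω i j => ∑ k, M (n + 1) ω i k * matProdF M n ω k j

/-!
Extend `r` from the simplex to the function `g w = (∑ w)^θ r (w / ∑ w)`, positively homogeneous
of degree `θ` on the nonnegative cone. By homogeneity the eigenfunction identity becomes
`E g (M w) = λ g w` for every `w ≥ 0`, and since `M_{n+1}` is independent of `L_n` and
distributed like `M_0`, conditioning on `L_n` gives `E g (L_n x) = λ^n g x`. Finally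
`g ≥ c₁ (∑ ·)^θ` and `g 1 = p^θ r (1/p) ≤ p^θ c₂`.
-/

open scoped ENNReal Matrix

theorem Matrix.mulVec_nonneg_of_nonneg {m n : Type*} [Fintype n] {A : Matrix m n ℝ}
    (hA : ∀ i j, 0 ≤ A i j) {w : n → ℝ} (hw : 0 ≤ w) : 0 ≤ A *ᵥ w :=
  fun i => sum_nonneg fun j _ => mul_nonneg (hA i j) (hw j)

section HomogeneousExtension

variable {ι : Type*} [Fintype ι] {θ c : ℝ} {r : (ι → ℝ) → ℝ}

/-- Spelled with `w i / ∑ k, w k` so that the integrand of the eigenfunction identity in `stmt14`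
is literally `homogeneousExtension θ r (M 0 ω *ᵥ x)`. Where `∑ w = 0` the argument of `r` is
junk, but for `θ ≠ 0` it is multiplied by `0 ^ θ = 0`. -/
noncomputable def homogeneousExtension (θ : ℝ) (r : (ι → ℝ) → ℝ) (w : ι → ℝ) : ℝ :=
  (∑ i, w i) ^ θ * r (fun i => w i / ∑ k, w k)

theorem homogeneousExtension_of_sum_eq_one {w : ι → ℝ} (hw : ∑ i, w i = 1) :
    homogeneousExtension θ r w = r w := by
  simp [homogeneousExtension, hw]

theorem homogeneousExtension_of_sum_eq_zero (hθ : θ ≠ 0) {w : ι → ℝ} (hw : ∑ i, w i = 0) :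
    homogeneousExtension θ r w = 0 := by
  simp [homogeneousExtension, hw, Real.zero_rpow hθ]

theorem homogeneousExtension_smul {s : ℝ} (hs : 0 < s) {w : ι → ℝ} (hw : 0 ≤ ∑ i, w i) :
    homogeneousExtension θ r (s • w) = s ^ θ * homogeneousExtension θ r w := by
  simp only [homogeneousExtension, Pi.smul_apply, smul_eq_mul, ← mul_sum,
    mul_div_mul_left _ _ hs.ne', Real.mul_rpow hs.le hw, mul_assoc]

theorem mul_rpow_sum_le_homogeneousExtension (hθ : θ ≠ 0)
    (hr : ∀ x ∈ stdSimplex ℝ ι, c ≤ r x) {w : ι → ℝ} (hw : 0 ≤ w) :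
    c * (∑ i, w i) ^ θ ≤ homogeneousExtension θ r w := by
  rcases (sum_nonneg fun i _ => hw i : 0 ≤ ∑ i, w i).eq_or_lt with hS | hS
  · simp [homogeneousExtension, ← hS, Real.zero_rpow hθ]
  · have hx : (fun i => w i / ∑ k, w k) ∈ stdSimplex ℝ ι :=
      ⟨fun i => div_nonneg (hw i) hS.le, by rw [← sum_div, div_self hS.ne']⟩
    rw [homogeneousExtension, mul_comm c]
    exact mul_le_mul_of_nonneg_left (hr _ hx) (Real.rpow_nonneg hS.le _)

theorem homogeneousExtension_nonneg (hθ : θ ≠ 0) (hc : 0 ≤ c)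
    (hr : ∀ x ∈ stdSimplex ℝ ι, c ≤ r x) {w : ι → ℝ} (hw : 0 ≤ w) :
    0 ≤ homogeneousExtension θ r w :=
  (mul_nonneg hc (Real.rpow_nonneg (sum_nonneg fun i _ => hw i) _)).trans
    (mul_rpow_sum_le_homogeneousExtension hθ hr hw)

theorem Measurable.homogeneousExtension (hr : Measurable r) :
    Measurable (homogeneousExtension θ r) := by
  unfold _root_.homogeneousExtension
  fun_prop

end HomogeneousExtension

section EigenfunctionStep

variable {ι Ω : Type*} [Fintype ι] [MeasurableSpace Ω] {μ : Measure Ω} {θ c lam : ℝ}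
  {r : (ι → ℝ) → ℝ} {A : Ω → Matrix ι ι ℝ}

theorem lintegral_homogeneousExtension_mulVec (hA : ∀ ω i j, 0 ≤ A ω i j) (hθ : θ ≠ 0)
    (hc : 0 < c) (hr : ∀ x ∈ stdSimplex ℝ ι, c ≤ r x) (hlam : 0 < lam)
    (heig : ∀ x ∈ stdSimplex ℝ ι,
      ∫ ω, homogeneousExtension θ r (A ω *ᵥ x) ∂μ = lam * r x)
    {w : ι → ℝ} (hw : 0 ≤ w) :
    ∫⁻ ω, ENNReal.ofReal (homogeneousExtension θ r (A ω *ᵥ w)) ∂μ =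
      ENNReal.ofReal lam * ENNReal.ofReal (homogeneousExtension θ r w) := by
  rcases (sum_nonneg fun i _ => hw i : 0 ≤ ∑ i, w i).eq_or_lt with hS | hS
  · obtain rfl : w = 0 := funext fun i =>
      (sum_eq_zero_iff_of_nonneg fun j _ => hw j).1 hS.symm i (mem_univ i)
    simp [homogeneousExtension_of_sum_eq_zero hθ]
  set S := ∑ i, w i
  set x := S⁻¹ • w
  have hx : x ∈ stdSimplex ℝ ι :=
    ⟨fun i => mul_nonneg (inv_nonneg.2 hS.le) (hw i), by simp [x, ← mul_sum, hS.ne', S]⟩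
  have hwx : w = S • x := by simp [x, smul_smul, hS.ne']
  have hAx : ∀ ω, 0 ≤ A ω *ᵥ x := fun ω => Matrix.mulVec_nonneg_of_nonneg (hA ω) hx.1
  have hint : Integrable (fun ω => homogeneousExtension θ r (A ω *ᵥ x)) μ :=
    Integrable.of_integral_ne_zero <| by
      rw [heig x hx]; exact (mul_pos hlam (hc.trans_le (hr x hx))).ne'
  calc ∫⁻ ω, ENNReal.ofReal (homogeneousExtension θ r (A ω *ᵥ w)) ∂μ
      = ∫⁻ ω, ENNReal.ofReal (S ^ θ) *
          ENNReal.ofReal (homogeneousExtension θ r (A ω *ᵥ x)) ∂μ := by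
        refine lintegral_congr fun ω => ?_
        rw [hwx, Matrix.mulVec_smul, homogeneousExtension_smul hS
          (sum_nonneg fun i _ => hAx ω i), ENNReal.ofReal_mul (by positivity)]
    _ = ENNReal.ofReal (S ^ θ) * ENNReal.ofReal (lam * r x) := by
        rw [lintegral_const_mul' _ _ ENNReal.ofReal_ne_top, ← heig x hx,
          ofReal_integral_eq_lintegral_ofReal hint (ae_of_all _ fun ω =>
            homogeneousExtension_nonneg hθ hc.le hr (hAx ω))]
    _ = ENNReal.ofReal lam * ENNReal.ofReal (homogeneousExtension θ r w) := by
        rw [hwx, homogeneousExtension_smul hS (sum_nonneg fun i _ => hx.1 i),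
          homogeneousExtension_of_sum_eq_one hx.2, ← ENNReal.ofReal_mul (by positivity),
          ← ENNReal.ofReal_mul hlam.le, mul_left_comm]

end EigenfunctionStep

theorem ProbabilityTheory.IndepFun.lintegral_comp_eq_lintegral_lintegral
    {Ω α β : Type*} [MeasurableSpace Ω] [MeasurableSpace α] [MeasurableSpace β]
    {μ : Measure Ω} [IsFiniteMeasure μ] {X : Ω → α} {Y : Ω → β} (hXY : IndepFun X Y μ)
    (hX : Measurable X) (hY : Measurable Y) {F : α × β → ℝ≥0∞} (hF : Measurable F) :
    ∫⁻ ω, F (X ω, Y ω) ∂μ = ∫⁻ ω', ∫⁻ ω, F (X ω, Y ω') ∂μ ∂μ := by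
  rw [← lintegral_map hF (hX.prodMk hY), hXY.map_prod_eq_prod_map_map hX.aemeasurable
    hY.aemeasurable, lintegral_prod_symm' _ hF, lintegral_map hF.lintegral_prod_left' hY]
  exact lintegral_congr fun ω' => lintegral_map (hF.comp measurable_prodMk_right) hX

section RandomMatrixProduct

variable {Ω : Type*} {p : ℕ} {M : ℕ → Ω → (Fin p → Fin p → ℝ)}

theorem matProdF_zero_mulVec (ω : Ω) (x : Fin p → ℝ) : matProdF M 0 ω *ᵥ x = x := by
  ext i
  simp [matProdF, Matrix.mulVec, dotProduct]

theorem matProdF_succ_mulVec (n : ℕ) (ω : Ω) (x : Fin p → ℝ) :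
    matProdF M (n + 1) ω *ᵥ x = M (n + 1) ω *ᵥ (matProdF M n ω *ᵥ x) :=
  (Matrix.mulVec_mulVec x (M (n + 1) ω) (matProdF M n ω)).symm

theorem matProdF_nonneg (hM : ∀ n ω i j, 0 ≤ M n ω i j) (n : ℕ) (ω : Ω) (i j : Fin p) :
    0 ≤ matProdF M n ω i j := by
  induction n generalizing i j with
  | zero => simp only [matProdF]; split_ifs <;> norm_num
  | succ n ih => exact sum_nonneg fun k _ => mul_nonneg (hM _ ω i k) (ih k j)

theorem measurable_matProdF_iSup_comap (n : ℕ) :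
    Measurable[⨆ k ≤ n, MeasurableSpace.comap (M k) inferInstance] (matProdF M n) := by
  induction n with
  | zero => exact measurable_const
  | succ n ih =>
    have hMn : Measurable[⨆ k ≤ n + 1, MeasurableSpace.comap (M k) inferInstance] (M (n + 1)) :=
      (comap_measurable _).mono (le_iSup₂_of_le (n + 1) le_rfl le_rfl) le_rfl
    have hL : Measurable[⨆ k ≤ n + 1, MeasurableSpace.comap (M k) inferInstance]
        (matProdF M n) :=
      ih.mono (iSup₂_mono' fun k hk => ⟨k, hk.trans n.le_succ, le_rfl⟩) le_rfl
    have hmul : Measurable fun q : (Fin p → Fin p → ℝ) × (Fin p → Fin p → ℝ) =>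
        fun i j => ∑ k, q.1 i k * q.2 k j := by
      fun_prop
    exact hmul.comp (hMn.prodMk hL)

variable [MeasurableSpace Ω] {μ : Measure Ω}

theorem measurable_matProdF (hmeas : ∀ n, Measurable (M n)) (n : ℕ) :
    Measurable (matProdF M n) :=
  (measurable_matProdF_iSup_comap n).mono (iSup₂_le fun k _ => (hmeas k).comap_le) le_rfl

theorem indepFun_matProdF (hmeas : ∀ n, Measurable (M n)) (hindep : iIndepFun M μ) (n : ℕ) :
    IndepFun (M (n + 1)) (matProdF M n) μ := by
  have h := indep_iSup_of_disjoint (fun k => (hmeas k).comap_le) hindep.iIndep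
    (S := {n + 1}) (T := Set.Iic n) (by simp)
  rw [IndepFun_iff_Indep]
  exact indep_of_indep_of_le h (le_iSup₂_of_le (n + 1) rfl le_rfl)
    (measurable_matProdF_iSup_comap n).comap_le

theorem lintegral_comp_matProdF_mulVec [IsProbabilityMeasure μ] (hM : ∀ n ω i j, 0 ≤ M n ω i j)
    (hmeas : ∀ n, Measurable (M n)) (hindep : iIndepFun M μ)
    (hident : ∀ n, IdentDistrib (M n) (M 0) μ μ) {G : (Fin p → ℝ) → ℝ≥0∞} (hG : Measurable G)
    {a : ℝ≥0∞} (hstep : ∀ w, 0 ≤ w → ∫⁻ ω, G (M 0 ω *ᵥ w) ∂μ = a * G w)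
    {x : Fin p → ℝ} (hx : 0 ≤ x) (n : ℕ) :
    ∫⁻ ω, G (matProdF M n ω *ᵥ x) ∂μ = a ^ n * G x := by
  induction n with
  | zero => simp [matProdF_zero_mulVec]
  | succ n ih =>
    have hF : Measurable fun q : (Fin p → Fin p → ℝ) × (Fin p → ℝ) => G (q.1 *ᵥ q.2) := by
      fun_prop
    have hmulVec : Measurable fun L : Fin p → Fin p → ℝ => L *ᵥ x := by fun_prop
    have hL : Measurable fun ω => matProdF M n ω *ᵥ x :=
      hmulVec.comp (measurable_matProdF hmeas n)
    have hLx : ∀ ω, 0 ≤ matProdF M n ω *ᵥ x := fun ω =>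
      Matrix.mulVec_nonneg_of_nonneg (matProdF_nonneg hM n ω) hx
    calc ∫⁻ ω, G (matProdF M (n + 1) ω *ᵥ x) ∂μ
        = ∫⁻ ω', ∫⁻ ω, G (M (n + 1) ω *ᵥ (matProdF M n ω' *ᵥ x)) ∂μ ∂μ := by
          simp only [matProdF_succ_mulVec]
          exact ((indepFun_matProdF hmeas hindep n).comp measurable_id
            hmulVec).lintegral_comp_eq_lintegral_lintegral (hmeas _) hL hF
      _ = ∫⁻ ω', a * G (matProdF M n ω' *ᵥ x) ∂μ := by
          refine lintegral_congr fun ω' => ?_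
          rw [← hstep _ (hLx ω')]
          exact ((hident (n + 1)).comp (hF.comp measurable_prodMk_right)).lintegral_eq
      _ = a * ∫⁻ ω, G (matProdF M n ω *ᵥ x) ∂μ := lintegral_const_mul a (hG.comp hL)
      _ = a ^ (n + 1) * G x := by rw [ih, pow_succ', mul_assoc]

theorem integral_rpow_sum_matProdF_mulVec_le [IsProbabilityMeasure μ] {θ c lam : ℝ}
    {r : (Fin p → ℝ) → ℝ} (hM : ∀ n ω i j, 0 ≤ M n ω i j) (hmeas : ∀ n, Measurable (M n))
    (hindep : iIndepFun M μ) (hident : ∀ n, IdentDistrib (M n) (M 0) μ μ) (hθ : θ ≠ 0)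
    (hr : Measurable r) (hc : 0 < c) (hrc : ∀ x ∈ stdSimplex ℝ (Fin p), c ≤ r x)
    (hlam : 0 < lam)
    (heig : ∀ x ∈ stdSimplex ℝ (Fin p),
      ∫ ω, homogeneousExtension θ r (M 0 ω *ᵥ x) ∂μ = lam * r x)
    {x : Fin p → ℝ} (hx : 0 ≤ x) (n : ℕ) :
    ∫ ω, (∑ i, (matProdF M n ω *ᵥ x) i) ^ θ ∂μ ≤
      c⁻¹ * lam ^ n * homogeneousExtension θ r x := by
  have hmean := lintegral_comp_matProdF_mulVec hM hmeas hindep hident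
    (G := fun w => ENNReal.ofReal (homogeneousExtension θ r w))
    (ENNReal.measurable_ofReal.comp hr.homogeneousExtension)
    (fun w hw => lintegral_homogeneousExtension_mulVec (hM 0) hθ hc hrc hlam heig hw) hx n
  have hLx : ∀ ω, 0 ≤ matProdF M n ω *ᵥ x := fun ω =>
    Matrix.mulVec_nonneg_of_nonneg (matProdF_nonneg hM n ω) hx
  have hL := measurable_matProdF hmeas n
  have hgx := homogeneousExtension_nonneg hθ hc.le hrc hx
  rw [integral_eq_lintegral_of_nonneg_ae
    (ae_of_all _ fun ω => Real.rpow_nonneg (sum_nonneg fun i _ => hLx ω i) θ)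
    ((by fun_prop : Measurable fun ω => ∑ i, (matProdF M n ω *ᵥ x) i).pow_const
      θ).aestronglyMeasurable]
  refine ENNReal.toReal_le_of_le_ofReal (by positivity) ?_
  calc ∫⁻ ω, ENNReal.ofReal ((∑ i, (matProdF M n ω *ᵥ x) i) ^ θ) ∂μ
      ≤ ∫⁻ ω, ENNReal.ofReal c⁻¹ *
          ENNReal.ofReal (homogeneousExtension θ r (matProdF M n ω *ᵥ x)) ∂μ := by
        refine lintegral_mono fun ω => ?_
        rw [← ENNReal.ofReal_mul (by positivity)]
        exact ENNReal.ofReal_le_ofReal <| (le_inv_mul_iff₀ hc).2 <|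
          mul_rpow_sum_le_homogeneousExtension hθ hrc (hLx ω)
    _ = ENNReal.ofReal (c⁻¹ * lam ^ n * homogeneousExtension θ r x) := by
        rw [lintegral_const_mul' _ _ ENNReal.ofReal_ne_top, hmean, ENNReal.ofReal_mul
          (by positivity), ENNReal.ofReal_mul (by positivity), ENNReal.ofReal_pow hlam.le,
          mul_assoc]

end RandomMatrixProduct

/-- Core estimate of Lemma 1 (L_arbit): for `θ ≥ 1` and i.i.d. random
nonnegative matrices, if `r_θ` is continuous on the ℓ¹-simplex with
`0 < c₁ ≤ r_θ ≤ c₂` and satisfies the eigenfunction identity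
`E[|M x|^θ r_θ(Mx/|Mx|)] = λ(θ) r_θ(x)` on the simplex, then
`E[|L_n 1|^θ] ≤ p^θ (c₂/c₁) λ(θ)^n`. -/
theorem stmt14 (p : ℕ) (hp : 0 < p) {Ω : Type*} [MeasurableSpace Ω]
    (μ : MeasureTheory.Measure Ω) [IsProbabilityMeasure μ]
    (M : ℕ → Ω → (Fin p → Fin p → ℝ))
    (hMnn : ∀ n ω i j, 0 ≤ M n ω i j)
    (hmeas : ∀ n, Measurable (M n))
    (hindep : iIndepFun M μ)
    (hident : ∀ n, IdentDistrib (M n) (M 0) μ μ)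
    (θ : ℝ) (hθ : 1 ≤ θ) (lamθ : ℝ) (hlam : 0 < lamθ)
    (r : (Fin p → ℝ) → ℝ) (hr : Continuous r)
    (c₁ c₂ : ℝ) (hc₁ : 0 < c₁)
    (hbounds : ∀ x : Fin p → ℝ, (∀ i, 0 ≤ x i) → (∑ i, x i) = 1 →
      c₁ ≤ r x ∧ r x ≤ c₂)
    (heig : ∀ x : Fin p → ℝ, (∀ i, 0 ≤ x i) → (∑ i, x i) = 1 →
      ∫ ω, (∑ i, ∑ j, M 0 ω i j * x j) ^ θ *
          r (fun i => (∑ j, M 0 ω i j * x j) / (∑ k, ∑ j, M 0 ω k j * x j)) ∂μ =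
        lamθ * r x) :
    ∀ n : ℕ, 1 ≤ n →
      ∫ ω, (∑ i, ∑ j, matProdF M n ω i j) ^ θ ∂μ ≤
        (p : ℝ) ^ θ * (c₂ / c₁) * lamθ ^ n := by
  intro n _
  have hx₀ : (fun _ => (p : ℝ)⁻¹) ∈ stdSimplex ℝ (Fin p) :=
    ⟨fun _ => by positivity, by simp [hp.ne']⟩
  obtain ⟨-, hrc₂⟩ := hbounds _ hx₀.1 hx₀.2
  have hmoment := integral_rpow_sum_matProdF_mulVec_le hMnn hmeas hindep hident
    (zero_lt_one.trans_le hθ).ne' hr.measurable hc₁ (fun x hx => (hbounds x hx.1 hx.2).1) hlam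
    (fun x hx => heig x hx.1 hx.2) zero_le_one n
  have hrow : ∀ ω, ∑ i, ∑ j, matProdF M n ω i j = ∑ i, (matProdF M n ω *ᵥ 1) i := by
    simp [Matrix.mulVec, dotProduct]
  have hextension_one : homogeneousExtension θ r 1 ≤ (p : ℝ) ^ θ * c₂ := by
    simpa [homogeneousExtension] using
      mul_le_mul_of_nonneg_left hrc₂ (by positivity : (0 : ℝ) ≤ p ^ θ)
  calc ∫ ω, (∑ i, ∑ j, matProdF M n ω i j) ^ θ ∂μ
      ≤ c₁⁻¹ * lamθ ^ n * homogeneousExtension θ r 1 := by simpa only [hrow] using hmoment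
    _ ≤ c₁⁻¹ * lamθ ^ n * ((p : ℝ) ^ θ * c₂) := by gcongr
    _ = (p : ℝ) ^ θ * (c₂ / c₁) * lamθ ^ n := by ring
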